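/- Let n ≥ 6 and let G be a graph maximizing the Q-spread s_Q among all connected graphs on n vertices. Then the number of edges of G satisfies |E(G)| > (n − 1)(n − 3)/2. -/

import Mathlib

/-- The adjacency matrix of a simple graph on `Fin n`, over `ℝ`. -/
noncomputable def adjMat {n : ℕ} (G : SimpleGraph (Fin n)) : Matrix (Fin n) (Fin n) ℝ :=
  letI : DecidableRel G.Adj := Classical.decRel _
  G.adjMatrix ℝ

/-- The set of eigenvalues of a real square matrix. -/
def eigSet {n : ℕ} (M : Matrix (Fin n) (Fin n) ℝ) : Set ℝ :=
  {mu : ℝ | ∃ x : Fin n → ℝ, x ≠ 0 ∧ M.mulVec x = mu • x}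

/-- The largest eigenvalue of a real square matrix. -/
noncomputable def lamMax {n : ℕ} (M : Matrix (Fin n) (Fin n) ℝ) : ℝ := sSup (eigSet M)

/-- The least eigenvalue of a real square matrix. -/
noncomputable def lamMin {n : ℕ} (M : Matrix (Fin n) (Fin n) ℝ) : ℝ := sInf (eigSet M)

/-- `λ₁(G)`: the largest adjacency eigenvalue of `G`. -/
noncomputable def lam1 {n : ℕ} (G : SimpleGraph (Fin n)) : ℝ := lamMax (adjMat G)

/-- The degree of a vertex. -/
noncomputable def deg {n : ℕ} (G : SimpleGraph (Fin n)) (v : Fin n) : ℕ :=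
  Nat.card {u : Fin n // G.Adj v u}

/-- The signless Laplacian `Q(G) = D(G) + A(G)`. -/
noncomputable def signlessLap {n : ℕ} (G : SimpleGraph (Fin n)) : Matrix (Fin n) (Fin n) ℝ :=
  Matrix.diagonal (fun v => (deg G v : ℝ)) + adjMat G

/-- `q₁(G)`: the largest signless Laplacian eigenvalue. -/
noncomputable def q1 {n : ℕ} (G : SimpleGraph (Fin n)) : ℝ := lamMax (signlessLap G)

/-- `qₙ(G)`: the least signless Laplacian eigenvalue. -/
noncomputable def qmin {n : ℕ} (G : SimpleGraph (Fin n)) : ℝ := lamMin (signlessLap G)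

/-- The `Q`-spread `s_Q(G) = q₁(G) - qₙ(G)`. -/
noncomputable def sQ {n : ℕ} (G : SimpleGraph (Fin n)) : ℝ := q1 G - qmin G

/-- The complete split graph `CS_{n,ω}`: a clique on the first `ω` vertices, completely
joined to an independent set on the remaining `n - ω` vertices. -/
def CS (n w : ℕ) : SimpleGraph (Fin n) where
  Adj u v := u ≠ v ∧ ((u : ℕ) < w ∨ (v : ℕ) < w)
  symm := by refine ⟨?_⟩; intro u v h; exact ⟨h.1.symm, h.2.symm⟩
  loopless := by refine ⟨?_⟩; intro u h; exact h.1 rfl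

/-- `K_{n-1}^+`: the complete graph on the first `n-1` vertices together with a pendant
vertex (the last vertex) joined to exactly one clique vertex (vertex `0`). -/
def KPlus (n : ℕ) : SimpleGraph (Fin n) where
  Adj u v := u ≠ v ∧ (((u : ℕ) < n - 1 ∧ (v : ℕ) < n - 1) ∨ (u : ℕ) = 0 ∨ (v : ℕ) = 0)
  symm := by refine ⟨?_⟩; intro u v h; refine ⟨h.1.symm, ?_⟩; tauto
  loopless := by refine ⟨?_⟩; intro u h; exact h.1 rfl


/-!
Suppose `2 |E(G)| ≤ (n - 1) (n - 3)`. Rescaling an eigenvector of `Q(G)` by the degrees and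
applying Gershgorin gives Merris' bound `q₁ ≤ max_v (d_v + m_v)`, where `d_v m_v` is the sum of
the degrees of the neighbours of `v`. Since every vertex has degree at least one,
`d_v m_v ≤ 2 |E(G)| - (n - 1) ≤ (n - 1) (n - 4)`, and also `d_v m_v ≤ (n - 1) d_v`; in both regimes
`d_v ≤ n - 4` and `d_v > n - 4` this forces `q₁ ≤ 2n - 5`. As `qₙ ≥ 0`, `s_Q(G) ≤ 2n - 5`.
On the other hand `K_{n-1}^+` has the two eigenvalues `(2n - 3 ± √(4n² - 20n + 33)) / 2`, with an
eigenvector constant on the hub, the pendant vertex and the rest of the clique, so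
`s_Q(K_{n-1}^+) > 2n - 5` and `G` is not a maximiser.
-/

open Finset SimpleGraph Matrix

section SignlessLaplacian

variable {n : ℕ} {G : SimpleGraph (Fin n)}

lemma deg_eq_degree [DecidableRel G.Adj] (v : Fin n) : deg G v = G.degree v := by
  rw [deg, Nat.card_eq_fintype_card, ← card_neighborFinset_eq_degree, neighborFinset_eq_filter]
  exact Fintype.card_subtype _

lemma adjMat_eq_adjMatrix [DecidableRel G.Adj] : adjMat G = G.adjMatrix ℝ := by
  unfold adjMat
  congr!

lemma signlessLap_mulVec_apply [DecidableRel G.Adj] (x : Fin n → ℝ) (v : Fin n) :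
    (signlessLap G *ᵥ x) v = G.degree v * x v + ∑ u ∈ G.neighborFinset v, x u := by
  rw [signlessLap, Matrix.add_mulVec, Pi.add_apply, Matrix.mulVec_diagonal, deg_eq_degree,
    adjMat_eq_adjMatrix, adjMatrix_mulVec_apply]

/-- Gershgorin's theorem for `diag(w)⁻¹ Q(G) diag(w)`: look at a vertex where `|x u| / w u` is
largest. -/
lemma exists_abs_sub_degree_mul_le [DecidableRel G.Adj] {μ : ℝ}
    (hμ : μ ∈ eigSet (signlessLap G)) {w : Fin n → ℝ} (hw : ∀ u, 0 < w u) :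
    ∃ v, |μ - G.degree v| * w v ≤ ∑ u ∈ G.neighborFinset v, w u := by
  obtain ⟨x, hx0, hx⟩ := hμ
  obtain ⟨u₀, hu₀⟩ := Function.ne_iff.mp hx0
  obtain ⟨v, -, hv⟩ := exists_max_image univ (fun u => |x u| / w u) ⟨u₀, mem_univ u₀⟩
  refine ⟨v, ?_⟩
  have hxv : 0 < |x v| / w v :=
    (div_pos (abs_pos.2 hu₀) (hw u₀)).trans_le (hv u₀ (mem_univ u₀))
  have hrow : (μ - G.degree v) * x v = ∑ u ∈ G.neighborFinset v, x u := by
    have := congrFun hx v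
    rw [signlessLap_mulVec_apply, Pi.smul_apply, smul_eq_mul] at this
    linarith
  have hbound : |μ - G.degree v| * w v * (|x v| / w v)
      ≤ (∑ u ∈ G.neighborFinset v, w u) * (|x v| / w v) :=
    calc |μ - G.degree v| * w v * (|x v| / w v) = |∑ u ∈ G.neighborFinset v, x u| := by
          rw [← hrow, abs_mul, mul_assoc, mul_div_cancel₀ _ (hw v).ne']
      _ ≤ ∑ u ∈ G.neighborFinset v, |x u| := abs_sum_le_sum_abs _ _
      _ ≤ ∑ u ∈ G.neighborFinset v, w u * (|x v| / w v) := by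
          refine sum_le_sum fun u _ => ?_
          rw [← div_le_iff₀' (hw u)]
          exact hv u (mem_univ u)
      _ = (∑ u ∈ G.neighborFinset v, w u) * (|x v| / w v) := (sum_mul _ _ _).symm
  exact le_of_mul_le_mul_right hbound hxv

lemma eigSet_signlessLap_subset_Icc :
    eigSet (signlessLap G) ⊆ Set.Icc 0 (2 * ((n : ℝ) - 1)) := by
  classical
  intro μ hμ
  obtain ⟨v, hv⟩ := exists_abs_sub_degree_mul_le hμ (w := 1) fun _ => one_pos
  simp only [Pi.one_apply, mul_one, sum_const, card_neighborFinset_eq_degree, nsmul_eq_mul] at hv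
  have hdeg : (G.degree v : ℝ) ≤ n - 1 := by
    have := G.degree_lt_card_verts v
    rw [Fintype.card_fin] at this
    rw [le_sub_iff_add_le]
    exact_mod_cast this
  rw [abs_le] at hv
  constructor <;> linarith [hv.1, hv.2]

lemma qmin_nonneg : 0 ≤ qmin G :=
  Real.sInf_nonneg fun _ hμ => (eigSet_signlessLap_subset_Icc hμ).1

lemma sub_le_sQ {μ ν : ℝ} (hμ : μ ∈ eigSet (signlessLap G))
    (hν : ν ∈ eigSet (signlessLap G)) : μ - ν ≤ sQ G := by
  have hμ₁ : μ ≤ q1 G := le_csSup (bddAbove_Icc.mono eigSet_signlessLap_subset_Icc) hμ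
  have hν₁ : qmin G ≤ ν := csInf_le (bddBelow_Icc.mono eigSet_signlessLap_subset_Icc) hν
  rw [sQ]
  linarith

/-- Merris' bound `μ ≤ max_v (d_v + m_v)`, with `m_v` the average degree of the neighbours
of `v`. -/
lemma exists_mul_degree_le [DecidableRel G.Adj] (hdeg : ∀ u, 0 < G.degree u) {μ : ℝ}
    (hμ : μ ∈ eigSet (signlessLap G)) :
    ∃ v, μ * G.degree v ≤
      (G.degree v : ℝ) ^ 2 + ∑ u ∈ G.neighborFinset v, (G.degree u : ℝ) := by
  obtain ⟨v, hv⟩ := exists_abs_sub_degree_mul_le hμ (w := fun u => G.degree u)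
    fun u => Nat.cast_pos.2 (hdeg u)
  refine ⟨v, ?_⟩
  have := mul_le_mul_of_nonneg_right (le_abs_self (μ - G.degree v)) (Nat.cast_nonneg (G.degree v))
  nlinarith

end SignlessLaplacian

/-- Every vertex outside `N(v) ∪ {v}` contributes at least `1` to the degree sum, and `v` itself
contributes `d_v`. -/
lemma SimpleGraph.sum_degree_neighborFinset_add_le {V : Type*} [Fintype V] [DecidableEq V]
    (G : SimpleGraph V) [DecidableRel G.Adj] (hdeg : ∀ u, 0 < G.degree u) (v : V) :
    ∑ u ∈ G.neighborFinset v, G.degree u + (Fintype.card V - 1) ≤ 2 * #G.edgeFinset := by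
  have hv : v ∈ (G.neighborFinset v)ᶜ := by simp
  have hcard : #(((G.neighborFinset v)ᶜ).erase v) = Fintype.card V - G.degree v - 1 := by
    rw [card_erase_of_mem hv, card_compl, card_neighborFinset_eq_degree]
  have hrest : #(((G.neighborFinset v)ᶜ).erase v)
      ≤ ∑ u ∈ ((G.neighborFinset v)ᶜ).erase v, G.degree u :=
    card_eq_sum_ones (s := ((G.neighborFinset v)ᶜ).erase v) ▸ sum_le_sum fun u _ => hdeg u
  rw [← G.sum_degrees_eq_twice_card_edges, ← sum_add_sum_compl (G.neighborFinset v),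
    ← add_sum_erase _ _ hv]
  have := G.degree_lt_card_verts v
  have := hdeg v
  omega

section Sparse

variable {n : ℕ} {G : SimpleGraph (Fin n)}

lemma q1_le_of_two_mul_card_edgeSet_le (hn : 3 ≤ n) (hG : G.Connected)
    (hm : 2 * (Nat.card G.edgeSet : ℝ) ≤ (n - 1) * (n - 3)) : q1 G ≤ 2 * n - 5 := by
  classical
  have : Nontrivial (Fin n) := Fin.nontrivial_iff_two_le.2 (by omega)
  have hdeg : ∀ u, 0 < G.degree u := fun u => hG.preconnected.degree_pos_of_nontrivial u
  have hdeg_le : ∀ u, (G.degree u : ℝ) ≤ n - 1 := fun u => by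
    have := G.degree_lt_card_verts u
    rw [Fintype.card_fin] at this
    rw [le_sub_iff_add_le]
    exact_mod_cast this
  have hnR : (3 : ℝ) ≤ n := by exact_mod_cast hn
  refine Real.sSup_le (fun μ hμ => ?_) (by linarith)
  obtain ⟨v, hμv⟩ := exists_mul_degree_le hdeg hμ
  set d : ℝ := (G.degree v : ℝ)
  set S : ℝ := ∑ u ∈ G.neighborFinset v, (G.degree u : ℝ)
  have hd₁ : 1 ≤ d := Nat.one_le_cast.2 (hdeg v)
  have hS_deg : S ≤ (n - 1) * d :=
    calc S ≤ ∑ _u ∈ G.neighborFinset v, ((n : ℝ) - 1) := sum_le_sum fun u _ => hdeg_le u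
      _ = (n - 1) * d := by rw [sum_const, card_neighborFinset_eq_degree, nsmul_eq_mul, mul_comm]
  have hS_edges : S ≤ (n - 1) * (n - 4) := by
    have h := G.sum_degree_neighborFinset_add_le hdeg v
    rw [Fintype.card_fin] at h
    have h' : S + ((n : ℝ) - 1) ≤ 2 * #G.edgeFinset := by
      have := (Nat.cast_le (α := ℝ)).2 h
      push_cast [Nat.cast_sub (show 1 ≤ n by omega)] at this
      exact this
    rw [Nat.card_eq_fintype_card, ← Set.toFinset_card, ← edgeFinset] at hm
    linarith
  -- for `d ≤ n - 4` the first bound on `S` suffices, otherwise use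
  -- `(d - (n - 1)) (d - (n - 4)) ≤ 0`
  rcases le_or_gt d (n - 4) with hsmall | hlarge
  · nlinarith
  · nlinarith [mul_nonneg (sub_nonneg.2 hlarge.le) (sub_nonneg.2 (hdeg_le v))]

lemma sQ_le_of_two_mul_card_edgeSet_le (hn : 3 ≤ n) (hG : G.Connected)
    (hm : 2 * (Nat.card G.edgeSet : ℝ) ≤ (n - 1) * (n - 3)) : sQ G ≤ 2 * n - 5 := by
  have := q1_le_of_two_mul_card_edgeSet_le hn hG hm
  have := qmin_nonneg (G := G)
  rw [sQ]
  linarith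

end Sparse

namespace KPlus

lemma connected {n : ℕ} (hn : 0 < n) : (KPlus n).Connected := by
  have : Nonempty (Fin n) := ⟨⟨0, hn⟩⟩
  have hreach : ∀ u, (KPlus n).Reachable u ⟨0, hn⟩ := fun u => by
    by_cases hu : u = ⟨0, hn⟩
    · rw [hu]
    · exact Adj.reachable ⟨hu, Or.inr (Or.inr rfl)⟩
  exact ⟨fun u v => (hreach u).trans (hreach v).symm⟩

section NeighborFinset

variable {k : ℕ} [DecidableRel (KPlus (k + 3)).Adj]

lemma neighborFinset_zero : (KPlus (k + 3)).neighborFinset 0 = univ.erase 0 := by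
  ext u
  simp only [mem_neighborFinset, mem_erase, mem_univ, and_true]
  exact ⟨fun h => h.1.symm, fun h => ⟨Ne.symm h, Or.inr (Or.inl rfl)⟩⟩

lemma neighborFinset_last : (KPlus (k + 3)).neighborFinset (Fin.last _) = {0} := by
  ext u
  rw [mem_neighborFinset, mem_singleton]
  simp only [KPlus, ne_eq, Fin.ext_iff, Fin.val_last, Fin.val_zero]
  omega

lemma neighborFinset_of_ne {v : Fin (k + 3)} (h₀ : v ≠ 0) (hlast : v ≠ Fin.last _) :
    (KPlus (k + 3)).neighborFinset v = (univ.erase (Fin.last _)).erase v := by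
  ext u
  rw [mem_neighborFinset, mem_erase, mem_erase]
  simp only [KPlus, mem_univ, and_true, ne_eq, Fin.ext_iff, Fin.val_last, Fin.val_zero]
    at h₀ hlast ⊢
  omega

end NeighborFinset

/-- The eigenvector takes the values `a`, `c`, `b` on the vertex `0` of degree `k + 2`, on the
pendant vertex and on the remaining `k + 1` clique vertices; `r ≠ 1` makes it nonzero. -/
lemma mem_eigSet_signlessLap {k : ℕ} {r : ℝ} (hr : r ^ 2 = (2 * k + 3) * r - 2 * k)
    (hr₁ : r ≠ 1) : r ∈ eigSet (signlessLap (KPlus (k + 3))) := by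
  classical
  set b := r - 1
  set c := r - (2 * k + 1)
  set a := c * b
  set x : Fin (k + 3) → ℝ := fun u =>
    b + (Pi.single 0 (a - b) : Fin (k + 3) → ℝ) u
      + (Pi.single (Fin.last _) (c - b) : Fin (k + 3) → ℝ) u
  have hsum : ∀ s : Finset (Fin (k + 3)), ∑ u ∈ s, x u =
      #s * b + (if 0 ∈ s then a - b else 0) + (if Fin.last _ ∈ s then c - b else 0) := by
    intro s
    simp only [x, sum_add_distrib, sum_const, nsmul_eq_mul, sum_pi_single']
  have h0last : (0 : Fin (k + 3)) ≠ Fin.last _ := by simp [Fin.ext_iff]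
  refine ⟨x, fun hx => hr₁ ?_, funext fun v => ?_⟩
  · have hx1 := congrFun hx 1
    simp only [x, Pi.zero_apply] at hx1
    rw [Pi.single_eq_of_ne (by simp), Pi.single_eq_of_ne (by simp [Fin.ext_iff]),
      add_zero, add_zero] at hx1
    linarith
  rw [signlessLap_mulVec_apply, ← card_neighborFinset_eq_degree, hsum, Pi.smul_apply, smul_eq_mul]
  by_cases h₀ : v = 0
  · subst h₀
    simp only [neighborFinset_zero, card_erase_of_mem (mem_univ _), card_univ, Fintype.card_fin,
      notMem_erase, mem_erase, ne_eq, h0last.symm, not_false_eq_true, mem_univ, and_true, x,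
      Pi.single_apply, h0last, if_true, if_false]
    push_cast
    linear_combination (k + 1 - r) * hr
  by_cases hlast : v = Fin.last _
  · subst hlast
    simp only [neighborFinset_last, card_singleton, mem_singleton, h0last.symm, x,
      Pi.single_apply, if_true, if_false]
    push_cast
    ring
  · simp only [neighborFinset_of_ne h₀ hlast, mem_erase, Ne.symm h₀, Ne.symm hlast, h0last,
      ne_eq, not_false_eq_true, mem_univ, and_true, not_true_eq_false, and_false,
      card_erase_of_mem, x, Pi.single_apply, h₀, hlast, if_true, if_false]
    rw [card_univ, Fintype.card_fin, show k + 3 - 1 - 1 = k + 1 by omega]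
    push_cast
    ring

lemma two_mul_sub_five_lt_sQ {n : ℕ} (hn : 3 ≤ n) : 2 * (n : ℝ) - 5 < sQ (KPlus n) := by
  obtain ⟨k, rfl⟩ : ∃ k, n = k + 3 := ⟨n - 3, by omega⟩
  push_cast
  -- the discriminant of `r ^ 2 - (2 k + 3) r + 2 k`
  set D : ℝ := (2 * k + 3) ^ 2 - 8 * k
  have hD : (2 * k + 1 : ℝ) ^ 2 < D := by linarith
  have hsqrt : 2 * (k : ℝ) + 1 < √D := Real.lt_sqrt_of_sq_lt hD
  have hsq : √D ^ 2 = D := Real.sq_sqrt ((sq_nonneg _).trans hD.le)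
  have hplus : (2 * k + 3 + √D) / 2 ∈ eigSet (signlessLap (KPlus (k + 3))) :=
    mem_eigSet_signlessLap (by linear_combination (1 / 4) * hsq)
      (ne_of_gt (by linarith [Real.sqrt_nonneg D]))
  have hminus : (2 * k + 3 - √D) / 2 ∈ eigSet (signlessLap (KPlus (k + 3))) :=
    mem_eigSet_signlessLap (by linear_combination (1 / 4) * hsq) (ne_of_lt (by linarith))
  have := sub_le_sQ hplus hminus
  linarith

end KPlus

theorem stmt11 (n : ℕ) (hn : 6 ≤ n) (G : SimpleGraph (Fin n)) (hconn : G.Connected)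
    (hmax : ∀ H : SimpleGraph (Fin n), H.Connected → sQ H ≤ sQ G) :
    ((n : ℝ) - 1) * ((n : ℝ) - 3) / 2 < (Nat.card G.edgeSet : ℝ) := by
  by_contra! hsparse
  have hG : sQ G ≤ 2 * n - 5 := sQ_le_of_two_mul_card_edgeSet_le (by omega) hconn (by linarith)
  have hK : 2 * (n : ℝ) - 5 < sQ (KPlus n) := KPlus.two_mul_sub_five_lt_sQ (by omega)
  linarith [hmax (KPlus n) (KPlus.connected (by omega))]
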